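/- The principal value integral PV ∫_{-∞}^{∞} x·eˣ/(eˣ − e⁻ˣ)² dx equals (1/2)·∫_{-∞}^{∞} x/(eˣ − e⁻ˣ) dx, and both equal π²/8. -/

import Mathlib

/-!
Reflecting `x ↦ -x` folds the truncated principal value integral into `∫_ε^∞ x / (eˣ - e⁻ˣ)`,
because the integrand and its reflection add up to `x / (eˣ - e⁻ˣ)`. Expanding
`1 / (eˣ - e⁻ˣ) = ∑ e^{-(2n+1)x}` and integrating term by term gives
`∫_0^∞ x / (eˣ - e⁻ˣ) = ∑ 1 / (2n+1)² = π² / 8`, the odd part of `ζ(2) = π² / 6`.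
-/

open Real MeasureTheory Filter

open Set Topology

section PrincipalValue

variable {E : Type*} [NormedAddCommGroup E] [NormedSpace ℝ E]

theorem integral_Iic_neg_add_integral_Ioi {f : ℝ → E} {c : ℝ} (hf : IntegrableOn f (Ioi c))
    (hsymm : IntegrableOn (fun x => f (-x) + f x) (Ioi c)) :
    (∫ x in Iic (-c), f x) + ∫ x in Ioi c, f x = ∫ x in Ioi c, (f (-x) + f x) := by
  have hneg : IntegrableOn (fun x => f (-x)) (Ioi c) := by
    simpa [Pi.sub_def] using hsymm.sub hf
  rw [← integral_comp_neg_Ioi, integral_add hneg hf]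

theorem tendsto_setIntegral_Ioi_nhdsGT {f : ℝ → E} {a : ℝ} (hf : IntegrableOn f (Ioi a)) :
    Tendsto (fun ε => ∫ x in Ioi ε, f x) (𝓝[>] a) (𝓝 (∫ x in Ioi a, f x)) := by
  have hprim : Tendsto (fun ε => ∫ x in a..ε, f x) (𝓝[>] a) (𝓝 0) := by
    have hint : IntervalIntegrable f volume (min a a) (max a (a + 1)) := by
      rw [min_self, max_eq_right (by linarith),
        intervalIntegrable_iff_integrableOn_Ioc_of_le (by linarith)]
      exact hf.mono_set Ioc_subset_Ioi_self
    have hcont := intervalIntegral.continuousWithinAt_primitive (Real.volume_singleton (a := a)) hint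
    simpa using (hcont.mono_of_mem_nhdsWithin (Icc_mem_nhdsGT (by linarith))).tendsto
  have hdiff : ∀ᶠ ε in 𝓝[>] a, (∫ x in Ioi a, f x) - ∫ x in a..ε, f x = ∫ x in Ioi ε, f x :=
    eventually_nhdsWithin_of_forall fun ε hε => by
      rw [← intervalIntegral.integral_Ioi_sub_Ioi hf (le_of_lt hε), sub_sub_cancel]
  simpa using (tendsto_const_nhds.sub hprim).congr' hdiff

end PrincipalValue

theorem Function.Even.integral_eq_two_mul_integral_Ioi {f : ℝ → ℝ} (hf : f.Even) :
    ∫ x, f x = 2 * ∫ x in Ioi 0, f x := by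
  rw [← integral_comp_abs]
  congr 1 with x
  rcases abs_cases x with ⟨hx, _⟩ | ⟨hx, _⟩
  · rw [hx]
  · rw [hx, hf]

theorem hasSum_one_div_two_mul_add_one_sq :
    HasSum (fun n : ℕ => 1 / (2 * n + 1 : ℝ) ^ 2) (π ^ 2 / 8) := by
  have heven : HasSum (fun n : ℕ => 1 / ((2 * n : ℕ) : ℝ) ^ 2) (π ^ 2 / 6 / 4) :=
    (hasSum_zeta_two.div_const 4).congr_fun fun n => by push_cast; ring
  obtain ⟨c, hodd⟩ : Summable (fun n : ℕ => 1 / ((2 * n + 1 : ℕ) : ℝ) ^ 2) :=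
    hasSum_zeta_two.summable.comp_injective fun a b h => by simpa using h
  have hc : π ^ 2 / 6 / 4 + c = π ^ 2 / 6 :=
    (heven.even_add_odd (f := fun n : ℕ => 1 / (n : ℝ) ^ 2) hodd).unique hasSum_zeta_two
  rw [show π ^ 2 / 8 = c by linarith]
  exact hodd.congr_fun fun n => by push_cast; rfl

theorem integral_Ioi_mul_exp_neg_mul {a : ℝ} (ha : 0 < a) :
    ∫ x in Ioi 0, x * exp (-(a * x)) = 1 / a ^ 2 := by
  have h := integral_rpow_mul_exp_neg_mul_Ioi two_pos ha
  norm_num [Gamma_two] at h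
  simpa using h

theorem exp_sub_exp_neg_eq_exp_mul (x : ℝ) :
    exp x - exp (-x) = exp x * (1 - exp (-(2 * x))) := by
  rw [mul_sub, mul_one, ← exp_add]
  ring_nf

theorem hasSum_mul_exp_neg_odd_mul {x : ℝ} (hx : 0 < x) :
    HasSum (fun n : ℕ => x * exp (-((2 * n + 1) * x))) (x / (exp x - exp (-x))) := by
  have hr : exp (-(2 * x)) < 1 := exp_lt_one_iff.2 (by linarith)
  rw [exp_sub_exp_neg_eq_exp_mul, div_mul_eq_div_div, div_eq_mul_inv _ (exp x), ← exp_neg,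
    div_eq_mul_inv]
  refine ((hasSum_geometric_of_lt_one (exp_pos _).le hr).mul_left (x * exp (-x))).congr_fun
    fun n => ?_
  rw [← exp_nat_mul, mul_assoc, ← exp_add]
  ring_nf

theorem integral_Ioi_div_exp_sub_exp_neg :
    ∫ x in Ioi 0, x / (exp x - exp (-x)) = π ^ 2 / 8 := by
  have hodd (n : ℕ) : 0 < (2 * n + 1 : ℝ) := by positivity
  have hint (n : ℕ) : IntegrableOn (fun x => x * exp (-((2 * n + 1) * x))) (Ioi 0) :=
    .of_integral_ne_zero (by rw [integral_Ioi_mul_exp_neg_mul (hodd n)]; positivity)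
  have hnorm (n : ℕ) : ∫ x in Ioi 0, ‖x * exp (-((2 * n + 1) * x))‖
      = ∫ x in Ioi 0, x * exp (-((2 * n + 1) * x)) :=
    setIntegral_congr_fun measurableSet_Ioi fun x hx =>
      norm_of_nonneg (mul_nonneg (le_of_lt hx) (exp_pos _).le)
  have hsum := hasSum_integral_of_summable_integral_norm hint (by
    simp only [hnorm, integral_Ioi_mul_exp_neg_mul (hodd _)]
    exact hasSum_one_div_two_mul_add_one_sq.summable)
  simp only [integral_Ioi_mul_exp_neg_mul (hodd _)] at hsum
  rw [setIntegral_congr_fun measurableSet_Ioi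
    fun x hx => (hasSum_mul_exp_neg_odd_mul hx).tsum_eq] at hsum
  exact hsum.unique hasSum_one_div_two_mul_add_one_sq

-- Non-integrable functions have Bochner integral `0`.
theorem integrableOn_Ioi_div_exp_sub_exp_neg :
    IntegrableOn (fun x => x / (exp x - exp (-x))) (Ioi 0) :=
  .of_integral_ne_zero (by rw [integral_Ioi_div_exp_sub_exp_neg]; positivity)

theorem even_div_exp_sub_exp_neg : Function.Even fun x : ℝ => x / (exp x - exp (-x)) :=
  fun x => by simp only [neg_neg, ← neg_sub (exp x), neg_div_neg_eq]

theorem mul_exp_div_exp_sub_exp_neg_sq_eq (x : ℝ) :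
    x * exp x / (exp x - exp (-x)) ^ 2 = x / (exp x - exp (-x)) * (1 - exp (-(2 * x)))⁻¹ := by
  rw [exp_sub_exp_neg_eq_exp_mul]
  field_simp

theorem integrableOn_Ioi_mul_exp_div_exp_sub_exp_neg_sq {ε : ℝ} (hε : 0 < ε) :
    IntegrableOn (fun x => x * exp x / (exp x - exp (-x)) ^ 2) (Ioi ε) := by
  have hc : 0 < 1 - exp (-(2 * ε)) := sub_pos.2 (exp_lt_one_iff.2 (by linarith))
  have hbound : ∀ x ∈ Ioi ε, ‖(1 - exp (-(2 * x)))⁻¹‖ ≤ (1 - exp (-(2 * ε)))⁻¹ := by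
    intro x hx
    have hle : 1 - exp (-(2 * ε)) ≤ 1 - exp (-(2 * x)) := by
      gcongr
      exact hx.le
    rw [norm_inv, norm_of_nonneg (hc.trans_le hle).le]
    exact inv_anti₀ hc hle
  simp_rw [mul_exp_div_exp_sub_exp_neg_sq_eq]
  exact (integrableOn_Ioi_div_exp_sub_exp_neg.mono_set (Ioi_subset_Ioi hε.le)).mul_bdd
    (by fun_prop) (ae_restrict_of_forall_mem measurableSet_Ioi hbound)

theorem mul_exp_div_exp_sub_exp_neg_sq_neg_add (x : ℝ) :
    -x * exp (-x) / (exp (-x) - exp (-(-x))) ^ 2 + x * exp x / (exp x - exp (-x)) ^ 2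
      = x / (exp x - exp (-x)) := by
  rw [neg_neg, ← neg_sub, neg_sq, neg_mul, neg_div, neg_add_eq_sub, ← sub_div, ← mul_sub, sq,
    mul_div_assoc, div_self_mul_self', div_eq_mul_inv]

/-- The principal value integral `PV ∫_ℝ x eˣ/(eˣ−e⁻ˣ)² dx` equals
`(1/2) ∫_ℝ x/(eˣ−e⁻ˣ) dx`, and both equal `π²/8`. -/
theorem pv_integral_x_exp :
    Tendsto (fun ε : ℝ =>
        (∫ x in Set.Iic (-ε), x * Real.exp x / (Real.exp x - Real.exp (-x)) ^ 2) +
          ∫ x in Set.Ioi ε, x * Real.exp x / (Real.exp x - Real.exp (-x)) ^ 2)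
      (nhdsWithin 0 (Set.Ioi 0)) (nhds (π ^ 2 / 8)) ∧
    (1 / 2) * ∫ x : ℝ, x / (Real.exp x - Real.exp (-x)) = π ^ 2 / 8 := by
  constructor
  · have htail := tendsto_setIntegral_Ioi_nhdsGT integrableOn_Ioi_div_exp_sub_exp_neg
    rw [integral_Ioi_div_exp_sub_exp_neg] at htail
    refine htail.congr' (eventually_nhdsWithin_of_forall fun ε (hε : 0 < ε) => ?_)
    have hsymm := integrableOn_Ioi_div_exp_sub_exp_neg.mono_set (Ioi_subset_Ioi hε.le)
    simp_rw [← mul_exp_div_exp_sub_exp_neg_sq_neg_add] at hsymm ⊢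
    exact (integral_Iic_neg_add_integral_Ioi
      (integrableOn_Ioi_mul_exp_div_exp_sub_exp_neg_sq hε) hsymm).symm
  · rw [even_div_exp_sub_exp_neg.integral_eq_two_mul_integral_Ioi,
      integral_Ioi_div_exp_sub_exp_neg]
    ring
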